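/- arXiv:2003.09694 — 4 statements merged into one kernel-verified Lean document; each statement's English description precedes it below -/
import Mathlib

section
/- If D(z) is a multivariate HS-derivation on ⋀V that is invertible as an element of End_K(⋀V)⟦z₁,…,z_n⟧, then its inverse D̄(z) is also a multivariate HS-derivation, i.e., D̄(z)(u∧v) = D̄(z)u ∧ D̄(z)v for all u, v ∈ ⋀V. -/
open ExteriorAlgebra

section ConvAux

variable {σ K A : Type*} [DecidableEq σ] [CommSemiring K] [Semiring A] [Module K A]

/-- Convolution action of an `End`-valued power series on an `A`-valued power series. -/
noncomputable def seriesConv (D : MvPowerSeries σ (Module.End K A)) (s : MvPowerSeries σ A) :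
    MvPowerSeries σ A :=
  fun i => ∑ p ∈ Finset.HasAntidiagonal.antidiagonal i,
    MvPowerSeries.coeff p.1 D (MvPowerSeries.coeff p.2 s)

theorem coeff_seriesConv (D : MvPowerSeries σ (Module.End K A)) (s : MvPowerSeries σ A)
    (i : σ →₀ ℕ) :
    MvPowerSeries.coeff i (seriesConv D s) = ∑ p ∈ Finset.HasAntidiagonal.antidiagonal i,
      MvPowerSeries.coeff p.1 D (MvPowerSeries.coeff p.2 s) := rfl

theorem seriesConv_one (s : MvPowerSeries σ A) :
    seriesConv (1 : MvPowerSeries σ (Module.End K A)) s = s := by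
  funext i
  rw [seriesConv, Finset.sum_eq_single ((0 : σ →₀ ℕ), i)]
  · have h1 : MvPowerSeries.coeff 0 (1 : MvPowerSeries σ (Module.End K A)) = 1 :=
      MvPowerSeries.coeff_zero_one
    simp [h1, MvPowerSeries.coeff_apply]
  · rintro ⟨a, b⟩ hab hne
    rw [Finset.HasAntidiagonal.mem_antidiagonal] at hab
    have ha : a ≠ 0 := by rintro rfl; simp at hab; exact hne (by simp [hab])
    simp [MvPowerSeries.coeff_one, ha]
  · intro h
    exact absurd (by simp) h

theorem seriesConv_assoc (D E : MvPowerSeries σ (Module.End K A)) (s : MvPowerSeries σ A) :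
    seriesConv (D * E) s = seriesConv D (seriesConv E s) := by
  apply MvPowerSeries.ext; intro i
  simp only [coeff_seriesConv, MvPowerSeries.coeff_mul, LinearMap.sum_apply, Module.End.mul_apply,
    map_sum, Finset.sum_sigma']
  apply Finset.sum_nbij' (fun ⟨⟨_i, j⟩, ⟨k, l⟩⟩ ↦ ⟨(k, l + j), (l, j)⟩)
    (fun ⟨⟨i, _j⟩, ⟨k, l⟩⟩ ↦ ⟨(i + k, l), (i, k)⟩) <;> aesop (add simp [add_assoc, mul_assoc])

theorem seriesConv_C (D : MvPowerSeries σ (Module.End K A)) (x : A) :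
    seriesConv D (MvPowerSeries.C x) = fun i => MvPowerSeries.coeff i D x := by
  funext i
  rw [seriesConv, Finset.sum_eq_single (i, (0 : σ →₀ ℕ))]
  · simp
  · rintro ⟨a, b⟩ hab hne
    rw [Finset.HasAntidiagonal.mem_antidiagonal] at hab
    have hb : b ≠ 0 := by rintro rfl; simp at hab; exact hne (by simp [hab])
    simp [MvPowerSeries.coeff_C, hb]
  · intro h
    exact absurd (by simp) h

theorem seriesConv_mul (D : MvPowerSeries σ (Module.End K A)) (s t : MvPowerSeries σ A)
    (hD : ∀ (u v : A) (i : σ →₀ ℕ), MvPowerSeries.coeff i D (u * v) =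
      ∑ p ∈ Finset.HasAntidiagonal.antidiagonal i,
        MvPowerSeries.coeff p.1 D u * MvPowerSeries.coeff p.2 D v) :
    seriesConv D (s * t) = seriesConv D s * seriesConv D t := by
  apply MvPowerSeries.ext; intro i
  simp only [coeff_seriesConv, MvPowerSeries.coeff_mul, map_sum, hD, Finset.sum_mul,
    Finset.mul_sum, Finset.sum_sigma']
  apply Finset.sum_nbij' (fun ⟨⟨j,k⟩,⟨a,b⟩,⟨c,d⟩⟩ ↦ ⟨(c+a, d+b), (d,b), (c,a)⟩)
    (fun ⟨⟨P,Q⟩,⟨d,b⟩,⟨c,a⟩⟩ ↦ ⟨(c+d, a+b), (a,b), (c,d)⟩) <;>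
    aesop (add simp [add_assoc, add_comm, add_left_comm, mul_assoc])

end ConvAux

/-- The power-series valued map on `⋀ V` determined by an element of
`End(⋀V)⟦z₁,…,z_n⟧`: `u ↦ Σ_i (D_i u) z^i`. -/
def seriesApply (K V : Type*) [Field K] [AddCommGroup V] [Module K V] (n : ℕ)
    (D : MvPowerSeries (Fin n) (Module.End K (ExteriorAlgebra K V)))
    (u : ExteriorAlgebra K V) : MvPowerSeries (Fin n) (ExteriorAlgebra K V) :=
  fun i => MvPowerSeries.coeff i D u

/-- If a multivariate HS-derivation `D(z)` is invertible in `End_K(⋀V)⟦z₁,…,z_n⟧`,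
then its inverse is again a multivariate HS-derivation. -/
theorem stmt_7 (K V : Type*) [Field K] [AddCommGroup V] [Module K V] (n : ℕ)
    (D E : MvPowerSeries (Fin n) (Module.End K (ExteriorAlgebra K V)))
    (hDE : D * E = 1) (hED : E * D = 1)
    (hD : ∀ u v : ExteriorAlgebra K V,
      seriesApply K V n D (u * v) = seriesApply K V n D u * seriesApply K V n D v) :
    ∀ u v : ExteriorAlgebra K V,
      seriesApply K V n E (u * v) = seriesApply K V n E u * seriesApply K V n E v := by
  set A := ExteriorAlgebra K V
  have hD' : ∀ (u v : A) (i : Fin n →₀ ℕ), MvPowerSeries.coeff i D (u * v) =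
      ∑ p ∈ Finset.HasAntidiagonal.antidiagonal i,
        MvPowerSeries.coeff p.1 D u * MvPowerSeries.coeff p.2 D v := by
    intro u v i
    have h : (MvPowerSeries.coeff i D) (u * v)
        = MvPowerSeries.coeff i (seriesApply K V n D u * seriesApply K V n D v) :=
      congrFun (hD u v) i
    rw [MvPowerSeries.coeff_mul] at h
    exact h
  have hE : ∀ x : A, seriesApply K V n E x = seriesConv E (MvPowerSeries.C x) :=
    fun x => (seriesConv_C E x).symm
  intro u v
  have h1 : seriesConv D (seriesApply K V n E (u * v)) = MvPowerSeries.C (u * v) := by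
    rw [hE, ← seriesConv_assoc, hDE, seriesConv_one]
  have h2 : seriesConv D (seriesApply K V n E u * seriesApply K V n E v)
      = MvPowerSeries.C (u * v) := by
    rw [seriesConv_mul D _ _ hD', hE u, hE v, ← seriesConv_assoc, ← seriesConv_assoc, hDE,
      seriesConv_one, seriesConv_one, ← map_mul]
  calc seriesApply K V n E (u * v)
      = seriesConv E (seriesConv D (seriesApply K V n E (u * v))) := by
        rw [← seriesConv_assoc, hED, seriesConv_one]
    _ = seriesConv E (seriesConv D (seriesApply K V n E u * seriesApply K V n E v)) := by
        rw [h1, h2]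
    _ = seriesApply K V n E u * seriesApply K V n E v := by
        rw [← seriesConv_assoc, hED, seriesConv_one]
end

section
/- For any ordered n-tuple of n×n matrices A = (A₁,…,A_n) over a field of characteristic 0, the identity Σ_{k=0}^{n} (-1)^k (1/k!) Σ_{σ∈S_n} τ_{e_{σ(1)}+⋯+e_{σ(k)}}(A) · (A_{σ(k+1)} ⋯ A_{σ(n)}) = 0 holds, where τ_i(A) is the i-trace of the tuple. -/
set_option maxHeartbeats 1000000

open Finset ExteriorAlgebra

namespace CH13




variable {n : ℕ}

/-- The squarefree multi-index with support `S`. -/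
noncomputable def eF (S : Finset (Fin n)) : Fin n →₀ ℕ := ∑ t ∈ S, Finsupp.single t 1

lemma eF_apply (S : Finset (Fin n)) (t : Fin n) : eF S t = if t ∈ S then 1 else 0 := by
  classical
  rw [eF, Finset.sum_apply']
  simp only [Finsupp.single_apply]
  exact Finset.sum_ite_eq' S t (fun _ => 1)

lemma eF_empty : eF (∅ : Finset (Fin n)) = 0 := by simp [eF]

lemma eF_singleton (t : Fin n) : eF {t} = Finsupp.single t 1 := by simp [eF]

lemma eF_support (S : Finset (Fin n)) : (eF S).support = S := by
  classical
  ext t; simp [Finsupp.mem_support_iff, eF_apply]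

lemma eF_deg (S : Finset (Fin n)) : (eF S).sum (fun _ e => e) = S.card := by
  classical
  rw [Finsupp.sum, eF_support]
  rw [Finset.sum_congr rfl (fun t ht => by rw [eF_apply, if_pos ht])]
  simp

lemma eF_eq_zero_iff (S : Finset (Fin n)) : eF S = 0 ↔ S = ∅ := by
  constructor
  · intro h
    have := eF_support S
    rw [h] at this; simpa using this.symm
  · rintro rfl; exact eF_empty

section Phi

variable {M : Type*} [AddCommMonoid M]

/-- `Phi m F S` is the sum of `F w` over all listings `w` of `S` (when `S.card = m`). -/
def Phi [DecidableEq (Fin n)] : ℕ → (List (Fin n) → M) → Finset (Fin n) → M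
  | 0, F, _ => F []
  | m+1, F, S => ∑ t ∈ S, Phi m (fun w => F (t :: w)) (S.erase t)

variable [DecidableEq (Fin n)]

def PHI (F : List (Fin n) → M) (S : Finset (Fin n)) : M := Phi S.card F S

lemma Phi_congr : ∀ (m : ℕ) (F G : List (Fin n) → M) (S : Finset (Fin n)), S.card = m →
    (∀ w : List (Fin n), w.Nodup → w.toFinset = S → F w = G w) → Phi m F S = Phi m G S := by
  intro m
  induction m with
  | zero =>
    intro F G S hS h
    have : S = ∅ := Finset.card_eq_zero.mp hS
    subst this
    exact h [] List.nodup_nil (by simp)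
  | succ m ih =>
    intro F G S hS h
    simp only [Phi]
    refine Finset.sum_congr rfl (fun t ht => ?_)
    refine ih _ _ _ (by rw [Finset.card_erase_of_mem ht, hS]; rfl) ?_
    intro w hw hwS
    refine h (t :: w) ?_ ?_
    · refine List.Nodup.cons ?_ hw
      intro hmem
      have : t ∈ S.erase t := by rw [← hwS]; simpa using hmem
      simp at this
    · simp [hwS, Finset.insert_erase ht]

lemma Phi_addHom {M' : Type*} [AddCommMonoid M'] (g : M →+ M') :
    ∀ (m : ℕ) (F : List (Fin n) → M) (S : Finset (Fin n)),
    Phi m (fun w => g (F w)) S = g (Phi m F S) := by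
  intro m
  induction m with
  | zero => intro F S; rfl
  | succ m ih =>
    intro F S
    simp only [Phi]
    rw [map_sum]
    exact Finset.sum_congr rfl (fun t _ => ih _ _)

lemma Phi_sum {ι : Type*} (I : Finset ι) :
    ∀ (m : ℕ) (F : ι → List (Fin n) → M) (S : Finset (Fin n)),
    Phi m (fun w => ∑ t ∈ I, F t w) S = ∑ t ∈ I, Phi m (F t) S := by
  intro m
  induction m with
  | zero => intro F S; rfl
  | succ m ih =>
    intro F S
    simp only [Phi]
    rw [Finset.sum_comm]
    exact Finset.sum_congr rfl (fun t _ => ih _ _)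

lemma PHI_empty (F : List (Fin n) → M) : PHI F ∅ = F [] := rfl

lemma PHI_rec (F : List (Fin n) → M) (S : Finset (Fin n)) (hS : S.Nonempty) :
    PHI F S = ∑ t ∈ S, PHI (fun w => F (t :: w)) (S.erase t) := by
  obtain ⟨m, hm⟩ : ∃ m, S.card = m + 1 :=
    ⟨S.card - 1, by have := Finset.card_pos.mpr hS; omega⟩
  rw [PHI, hm]
  simp only [Phi]
  refine Finset.sum_congr rfl (fun t ht => ?_)
  rw [PHI, Finset.card_erase_of_mem ht, hm, Nat.add_sub_cancel]

lemma PHI_congr (F G : List (Fin n) → M) (S : Finset (Fin n))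
    (h : ∀ w : List (Fin n), w.Nodup → w.toFinset = S → F w = G w) : PHI F S = PHI G S :=
  Phi_congr _ _ _ _ rfl h

lemma PHI_sum {ι : Type*} (I : Finset ι) (F : ι → List (Fin n) → M) (S : Finset (Fin n)) :
    PHI (fun w => ∑ t ∈ I, F t w) S = ∑ t ∈ I, PHI (F t) S := Phi_sum I _ _ _

lemma PHI_smul {R : Type*} [Monoid R] [DistribMulAction R M] (c : R)
    (F : List (Fin n) → M) (S : Finset (Fin n)) :
    PHI (fun w => c • F w) S = c • PHI F S := Phi_addHom (DistribMulAction.toAddMonoidHom M c) _ _ _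

end Phi


variable {n : ℕ}

lemma mem_drop_finRange (k : ℕ) (j : Fin n) : j ∈ (List.finRange n).drop k ↔ k ≤ (j : ℕ) := by
  constructor
  · intro h
    obtain ⟨i, hi, hij⟩ := List.mem_iff_getElem.mp h
    rw [List.getElem_drop, List.getElem_finRange] at hij
    subst hij; simp
  · intro h
    have hlen : (List.finRange n).length = n := List.length_finRange
    refine List.mem_iff_getElem.mpr ⟨(j : ℕ) - k, ?_, ?_⟩
    · rw [List.length_drop, hlen]; omega
    · rw [List.getElem_drop, List.getElem_finRange]
      apply Fin.ext; simp; omega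

lemma perm_image_compl [DecidableEq (Fin n)] (σ : Equiv.Perm (Fin n)) (S : Finset (Fin n)) :
    Finset.image σ Sᶜ = (Finset.image σ S)ᶜ := by
  ext t
  simp only [Finset.mem_image, Finset.mem_compl]
  constructor
  · rintro ⟨a, ha, rfl⟩ ⟨b, hb, hba⟩
    exact ha (by rwa [← σ.injective hba])
  · intro h
    exact ⟨σ.symm t, fun hc => h ⟨σ.symm t, hc, by simp⟩, by simp⟩

lemma nsmul_cancel (K : Type*) [Field K] [CharZero K] {M : Type*} [AddCommMonoid M] [Module K M]
    {c : ℕ} (hc : c ≠ 0) {x y : M} (h : c • x = c • y) : x = y := by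
  rw [← Nat.cast_smul_eq_nsmul K, ← Nat.cast_smul_eq_nsmul K] at h
  have hc' : (c : K) ≠ 0 := Nat.cast_ne_zero.mpr hc
  calc x = (c : K)⁻¹ • ((c : K) • x) := by rw [inv_smul_smul₀ hc']
  _ = (c : K)⁻¹ • ((c : K) • y) := by rw [h]
  _ = y := by rw [inv_smul_smul₀ hc']

lemma claim3 [DecidableEq (Fin n)] {M : Type*} [AddCommMonoid M] (ℓ : ℕ)
    (f : Fin n → Finset (Fin n) → M) :
    ∑ S ∈ powersetCard ℓ (univ : Finset (Fin n)), ∑ t ∈ Sᶜ, f t S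
      = ∑ S ∈ powersetCard (ℓ+1) (univ : Finset (Fin n)), ∑ t ∈ S, f t (S.erase t) := by
  rw [Finset.sum_sigma', Finset.sum_sigma']
  refine Finset.sum_nbij' (fun p => ⟨insert p.2 p.1, p.2⟩) (fun q => ⟨q.1.erase q.2, q.2⟩)
    ?_ ?_ ?_ ?_ ?_
  · rintro ⟨S, t⟩ hp
    simp only [Finset.mem_sigma, Finset.mem_powersetCard_univ, Finset.mem_compl] at hp ⊢
    obtain ⟨h1, h2⟩ := hp
    exact ⟨by rw [Finset.card_insert_of_notMem h2, h1], Finset.mem_insert_self _ _⟩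
  · rintro ⟨S, t⟩ hp
    simp only [Finset.mem_sigma, Finset.mem_powersetCard_univ, Finset.mem_compl] at hp ⊢
    obtain ⟨h1, h2⟩ := hp
    exact ⟨by rw [Finset.card_erase_of_mem h2, h1]; rfl, Finset.notMem_erase _ _⟩
  · rintro ⟨S, t⟩ hp
    simp only [Finset.mem_sigma, Finset.mem_powersetCard_univ, Finset.mem_compl] at hp
    simp [Finset.erase_insert hp.2]
  · rintro ⟨S, t⟩ hp
    simp only [Finset.mem_sigma, Finset.mem_powersetCard_univ, Finset.mem_compl] at hp
    simp [Finset.insert_erase hp.2]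
  · rintro ⟨S, t⟩ hp
    simp only [Finset.mem_sigma, Finset.mem_powersetCard_univ, Finset.mem_compl] at hp
    simp [Finset.erase_insert hp.2]

lemma count_claim (K : Type*) [Field K] [CharZero K] {M : Type*} [AddCommMonoid M] [Module K M]
    [DecidableEq (Fin n)] :
    ∀ (ℓ : ℕ), ℓ ≤ n → ∀ F : List (Fin n) → M,
    ∑ σ : Equiv.Perm (Fin n), F (((List.finRange n).drop (n - ℓ)).map σ)
      = (n - ℓ).factorial • ∑ S ∈ powersetCard ℓ (univ : Finset (Fin n)), PHI F S := by
  intro ℓ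
  induction ℓ with
  | zero =>
    intro _ F
    rw [Nat.sub_zero]
    rw [List.drop_eq_nil_of_le (by simp)]
    simp only [List.map_nil]
    rw [Finset.sum_const, Finset.card_univ, Fintype.card_perm, Fintype.card_fin]
    rw [Finset.powersetCard_zero, Finset.sum_singleton, PHI_empty]
  | succ ℓ ih =>
    intro hl F
    have hm : n - ℓ = (n - (ℓ+1)) + 1 := by omega
    set m : ℕ := n - (ℓ+1) with hmdef
    have hmn : m < n := by omega
    set mh : Fin n := ⟨m, hmn⟩ with hmh
    -- head split
    have hsplit : ∀ σ : Equiv.Perm (Fin n),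
        ((List.finRange n).drop m).map σ = σ mh :: ((List.finRange n).drop (m+1)).map σ := by
      intro σ
      have hlen : m < (List.finRange n).length := by rw [List.length_finRange]; exact hmn
      rw [List.drop_eq_getElem_cons hlen, List.map_cons, List.getElem_finRange]
      rfl
    -- swap invariance
    have hswap : ∀ i : Fin n, (i : ℕ) ≤ m →
        (∑ σ : Equiv.Perm (Fin n), F (((List.finRange n).drop m).map σ))
        = ∑ σ : Equiv.Perm (Fin n), F (σ i :: ((List.finRange n).drop (m+1)).map σ) := by
      intro i hi
      rw [← Equiv.sum_comp (Equiv.mulRight (Equiv.swap i mh))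
        (fun σ => F (((List.finRange n).drop m).map σ))]
      refine Finset.sum_congr rfl (fun σ _ => ?_)
      show F (((List.finRange n).drop m).map (σ * Equiv.swap i mh)) = _
      rw [hsplit]
      congr 1
      rw [Equiv.Perm.mul_apply, Equiv.swap_apply_right]
      congr 1
      refine List.map_congr_left (fun j hj => ?_)
      have hj' : m + 1 ≤ (j : ℕ) := (mem_drop_finRange _ _).mp hj
      rw [Equiv.Perm.mul_apply, Equiv.swap_apply_of_ne_of_ne]
      · exact fun h => by subst h; omega
      · exact fun h => by rw [h] at hj'; simp [hmh] at hj'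
    have hfilter : (Finset.filter (fun i : Fin n => (i : ℕ) ≤ m) univ) = Finset.Iic mh := by
      ext j; simp [Finset.mem_Iic, Fin.le_def, hmh]
    have hIic : (Finset.Iic mh).card = m + 1 := Fin.card_Iic mh
    -- complement identification
    have hcompl : ∀ σ : Equiv.Perm (Fin n),
        ((((List.finRange n).drop (m+1)).map σ).toFinset)ᶜ = Finset.image σ (Finset.Iic mh) := by
      intro σ
      have hval : (mh : ℕ) = m := rfl
      ext t
      simp only [Finset.mem_compl, List.mem_toFinset, List.mem_map, Finset.mem_image,
        Finset.mem_Iic]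
      constructor
      · intro h
        refine ⟨σ.symm t, ?_, by simp⟩
        by_contra hc
        rw [Fin.le_def, hval] at hc
        exact h ⟨σ.symm t, (mem_drop_finRange _ _).mpr (by omega), by simp⟩
      · rintro ⟨i, hi, rfl⟩ ⟨j, hj, hji⟩
        have hij := σ.injective hji; subst hij
        have h1 := (mem_drop_finRange _ _).mp hj
        rw [Fin.le_def, hval] at hi; omega
    -- the (m+1)-fold sum
    have hkey : (m + 1) • (∑ σ : Equiv.Perm (Fin n), F (((List.finRange n).drop m).map σ))
        = ∑ σ : Equiv.Perm (Fin n),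
            ∑ t ∈ ((((List.finRange n).drop (m+1)).map σ).toFinset)ᶜ,
              F (t :: ((List.finRange n).drop (m+1)).map σ) := by
      calc (m + 1) • (∑ σ : Equiv.Perm (Fin n), F (((List.finRange n).drop m).map σ))
          = ∑ _i ∈ Finset.Iic mh, ∑ σ : Equiv.Perm (Fin n),
              F (((List.finRange n).drop m).map σ) := by
            rw [Finset.sum_const, hIic]
        _ = ∑ i ∈ Finset.Iic mh, ∑ σ : Equiv.Perm (Fin n),
              F (σ i :: ((List.finRange n).drop (m+1)).map σ) :=
            Finset.sum_congr rfl (fun i hi => hswap i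
              (Fin.le_def.mp (Finset.mem_Iic.mp hi)))
        _ = ∑ σ : Equiv.Perm (Fin n), ∑ i ∈ Finset.Iic mh,
              F (σ i :: ((List.finRange n).drop (m+1)).map σ) := Finset.sum_comm
        _ = _ := by
            refine Finset.sum_congr rfl (fun σ _ => ?_)
            rw [hcompl σ, Finset.sum_image (fun a _ b _ h => σ.injective h)]
    -- apply the induction hypothesis to F-tilde
    have hml : n - ℓ = m + 1 := hm
    have ihF := ih (by omega) (fun w => ∑ t ∈ (w.toFinset)ᶜ, F (t :: w))
    rw [hml] at ihF
    have hPHI : ∀ S ∈ powersetCard ℓ (univ : Finset (Fin n)),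
        PHI (fun w => ∑ t ∈ (w.toFinset)ᶜ, F (t :: w)) S
          = ∑ t ∈ Sᶜ, PHI (fun w => F (t :: w)) S := by
      intro S _
      rw [PHI_congr _ (fun w => ∑ t ∈ Sᶜ, F (t :: w)) S (fun w _ hw => by rw [hw]),
        PHI_sum]
    have hrec : ∀ S ∈ powersetCard (ℓ+1) (univ : Finset (Fin n)),
        ∑ t ∈ S, PHI (fun w => F (t :: w)) (S.erase t) = PHI F S := by
      intro S hS
      rw [Finset.mem_powersetCard_univ] at hS
      exact (PHI_rec F S (Finset.card_pos.mp (by omega))).symm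
    refine nsmul_cancel K (Nat.succ_ne_zero m) ?_
    rw [hkey, ihF, Finset.sum_congr rfl hPHI, claim3, Finset.sum_congr rfl hrec,
      Nat.factorial_succ, mul_smul]


variable {K : Type*} [Field K] {n : ℕ}

/-- basis vectors of `Fin n → K` -/
def bv' (K : Type*) [Field K] {n : ℕ} (s : Fin n) : Fin n → K := fun j => if s = j then 1 else 0

section Matrices
variable (A : Fin n → Matrix (Fin n) (Fin n) K)

/-- sum of products `A_{t₁} ⋯ A_{t_k}` over all listings of `S`. -/
noncomputable def Bm (S : Finset (Fin n)) : Matrix (Fin n) (Fin n) K :=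
  PHI (fun w => (w.map A).prod) S

lemma Bm_empty : Bm A ∅ = 1 := by rw [Bm, PHI_empty]; rfl

lemma Bm_rec (S : Finset (Fin n)) (hS : S.Nonempty) :
    Bm A S = ∑ t ∈ S, A t * Bm A (S.erase t) := by
  rw [Bm, PHI_rec _ _ hS]
  refine Finset.sum_congr rfl (fun t ht => ?_)
  have : (fun w : List (Fin n) => (((t :: w)).map A).prod)
      = fun w => A t * ((w.map A).prod) := funext fun w => by simp
  rw [this]
  exact Phi_addHom (AddMonoidHom.mulLeft (A t)) _ _ _

end Matrices

section Dsec

variable (A : Fin n → Matrix (Fin n) (Fin n) K)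
variable (D : ExteriorAlgebra K (Fin n → K) →ₐ[K]
      MvPowerSeries (Fin n) (ExteriorAlgebra K (Fin n → K)))

/-- decomposition of a squarefree antidiagonal -/
lemma antidiag_eF {S : Finset (Fin n)} {p : (Fin n →₀ ℕ) × (Fin n →₀ ℕ)}
    (hp : p.1 + p.2 = eF S) :
    p.1.support ⊆ S ∧ p.1 = eF p.1.support ∧ p.2 = eF (S \ p.1.support) := by
  classical
  have h : ∀ t, p.1 t + p.2 t = if t ∈ S then 1 else 0 := by
    intro t
    rw [← Finsupp.add_apply, hp, eF_apply]
  have hsub : p.1.support ⊆ S := by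
    intro t ht
    rw [Finsupp.mem_support_iff] at ht
    have := h t
    by_contra hc
    rw [if_neg hc] at this; omega
  refine ⟨hsub, ?_, ?_⟩
  · ext t
    rw [eF_apply]
    by_cases ht : t ∈ p.1.support
    · rw [if_pos ht]
      have h1 : p.1 t ≠ 0 := Finsupp.mem_support_iff.mp ht
      have := h t
      rw [if_pos (hsub ht)] at this; omega
    · rw [if_neg ht]
      exact Finsupp.notMem_support_iff.mp ht
  · ext t
    rw [eF_apply]
    simp only [Finset.mem_sdiff]
    have := h t
    by_cases ht : t ∈ p.1.support
    · have h1 : p.1 t ≠ 0 := Finsupp.mem_support_iff.mp ht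
      rw [if_neg (fun hc => hc.2 ht)]
      rw [if_pos (hsub ht)] at this; omega
    · have h1 : p.1 t = 0 := Finsupp.notMem_support_iff.mp ht
      by_cases htS : t ∈ S
      · rw [if_pos ⟨htS, ht⟩]
        rw [if_pos htS] at this; omega
      · rw [if_neg (fun hc => htS hc.1)]
        rw [if_neg htS] at this; omega

lemma eF_add_eF {U S : Finset (Fin n)} (hU : U ⊆ S) : eF U + eF (S \ U) = eF S := by
  classical
  ext t
  rw [Finsupp.add_apply, eF_apply, eF_apply, eF_apply]
  simp only [Finset.mem_sdiff]
  by_cases h1 : t ∈ U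
  · rw [if_pos h1, if_neg (fun hc => hc.2 h1), if_pos (hU h1)]
  · rw [if_neg h1]
    by_cases h2 : t ∈ S
    · rw [if_pos ⟨h2, h1⟩, if_pos h2]
    · rw [if_neg (fun hc => h2 hc.1), if_neg h2]

/-- Leibniz rule at a squarefree multi-index. -/
lemma leib (S : Finset (Fin n)) (a b : ExteriorAlgebra K (Fin n → K)) :
    MvPowerSeries.coeff (R := _) (eF S) (D (a * b))
      = ∑ U ∈ S.powerset, MvPowerSeries.coeff (R := _) (eF U) (D a)
          * MvPowerSeries.coeff (R := _) (eF (S \ U)) (D b) := by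
  classical
  rw [map_mul, MvPowerSeries.coeff_mul]
  refine Finset.sum_nbij' (fun p => p.1.support) (fun U => (eF U, eF (S \ U)))
    ?_ ?_ ?_ ?_ ?_
  · intro p hp
    rw [Finset.HasAntidiagonal.mem_antidiagonal] at hp
    exact Finset.mem_powerset.mpr (antidiag_eF hp).1
  · intro U hU
    rw [Finset.HasAntidiagonal.mem_antidiagonal]
    exact eF_add_eF (Finset.mem_powerset.mp hU)
  · intro p hp
    rw [Finset.HasAntidiagonal.mem_antidiagonal] at hp
    obtain ⟨h1, h2, h3⟩ := antidiag_eF hp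
    exact Prod.ext h2.symm h3.symm
  · intro U _
    exact eF_support U
  · intro p hp
    rw [Finset.HasAntidiagonal.mem_antidiagonal] at hp
    obtain ⟨h1, h2, h3⟩ := antidiag_eF hp
    rw [← h2, ← h3]

end Dsec

section More

lemma sum_mulVec' {γ : Type*} (T : Finset γ) (M : γ → Matrix (Fin n) (Fin n) K)
    (x : Fin n → K) : (∑ t ∈ T, M t).mulVec x = ∑ t ∈ T, (M t).mulVec x := by
  classical
  induction T using Finset.induction_on with
  | empty => simp [Matrix.zero_mulVec]
  | insert _ _ h ih => rw [Finset.sum_insert h, Finset.sum_insert h, Matrix.add_mulVec, ih]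

variable (A : Fin n → Matrix (Fin n) (Fin n) K)
variable (D : ExteriorAlgebra K (Fin n → K) →ₐ[K]
      MvPowerSeries (Fin n) (ExteriorAlgebra K (Fin n → K)))

/-- the convolution identity: coefficients of `1 - Σ Aₜ zₜ` against `Bm` give `δ`. -/
lemma conv
    (h0 : ∀ x : Fin n → K,
      MvPowerSeries.coeff (R := ExteriorAlgebra K (Fin n → K)) 0 (D (ι K x)) = ι K x)
    (h1 : ∀ (t : Fin n) (x : Fin n → K),
      MvPowerSeries.coeff (R := ExteriorAlgebra K (Fin n → K)) (Finsupp.single t 1)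
        (D (ι K x)) = - ι K ((A t).mulVec x))
    (h2 : ∀ (i : Fin n →₀ ℕ) (x : Fin n → K), 2 ≤ i.sum (fun _ e => e) →
      MvPowerSeries.coeff (R := ExteriorAlgebra K (Fin n → K)) i (D (ι K x)) = 0)
    (T : Finset (Fin n)) (x : Fin n → K) :
    ∑ U ∈ T.powerset,
        MvPowerSeries.coeff (R := ExteriorAlgebra K (Fin n → K)) (eF U)
          (D (ι K ((Bm A (T \ U)).mulVec x)))
      = if T = ∅ then ι K x else 0 := by
  classical
  by_cases hT : T = ∅
  · subst hT
    rw [if_pos rfl, Finset.powerset_empty, Finset.sum_singleton, eF_empty,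
      Finset.sdiff_empty, Bm_empty, Matrix.one_mulVec]
    exact h0 x
  · rw [if_neg hT]
    rw [← Finset.sum_filter_add_sum_filter_not T.powerset (fun U => U.card ≤ 1)]
    have hzero : ∑ U ∈ T.powerset.filter (fun U => ¬ U.card ≤ 1),
        MvPowerSeries.coeff (R := ExteriorAlgebra K (Fin n → K)) (eF U)
          (D (ι K ((Bm A (T \ U)).mulVec x))) = 0 := by
      refine Finset.sum_eq_zero (fun U hU => ?_)
      rw [Finset.mem_filter] at hU
      exact h2 _ _ (by rw [eF_deg]; omega)
    rw [hzero, add_zero]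
    have hfe : T.powerset.filter (fun U => U.card ≤ 1)
        = insert ∅ (T.image fun t => ({t} : Finset (Fin n))) := by
      ext U
      simp only [Finset.mem_filter, Finset.mem_powerset, Finset.mem_insert, Finset.mem_image]
      constructor
      · rintro ⟨hsub, hcard⟩
        rcases Nat.le_one_iff_eq_zero_or_eq_one.mp hcard with h | h
        · exact Or.inl (Finset.card_eq_zero.mp h)
        · obtain ⟨a, ha⟩ := Finset.card_eq_one.mp h
          exact Or.inr ⟨a, hsub (by rw [ha]; exact Finset.mem_singleton_self a), ha.symm⟩
      · rintro (rfl | ⟨t, ht, rfl⟩)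
        · exact ⟨Finset.empty_subset _, by simp⟩
        · exact ⟨Finset.singleton_subset_iff.mpr ht, by simp⟩
    rw [hfe, Finset.sum_insert (by
      simp only [Finset.mem_image]
      rintro ⟨t, -, ht⟩
      exact Finset.singleton_ne_empty t ht)]
    rw [Finset.sum_image (fun a _ b _ h => Finset.singleton_injective h)]
    have e1 : MvPowerSeries.coeff (R := ExteriorAlgebra K (Fin n → K)) (eF (∅ : Finset (Fin n)))
        (D (ι K ((Bm A (T \ (∅ : Finset (Fin n)))).mulVec x)))
        = ι K ((Bm A T).mulVec x) := by
      rw [eF_empty, Finset.sdiff_empty]; exact h0 _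
    have e2 : ∀ t ∈ T, MvPowerSeries.coeff (R := ExteriorAlgebra K (Fin n → K)) (eF {t})
        (D (ι K ((Bm A (T \ {t})).mulVec x)))
        = - ι K ((A t).mulVec ((Bm A (T.erase t)).mulVec x)) := by
      intro t ht
      rw [eF_singleton, ← Finset.erase_eq]
      exact h1 t _
    rw [e1, Finset.sum_congr rfl e2]
    have hBrec : (Bm A T).mulVec x
        = ∑ t ∈ T, (A t).mulVec ((Bm A (T.erase t)).mulVec x) := by
      rw [Bm_rec A T (Finset.nonempty_of_ne_empty hT), sum_mulVec']
      exact Finset.sum_congr rfl (fun t _ => (Matrix.mulVec_mulVec _ _ _).symm)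
    rw [hBrec, map_sum, ← Finset.sum_add_distrib]
    exact Finset.sum_eq_zero (fun t _ => add_neg_cancel _)

/-- vanishing of high squarefree coefficients on short products. -/
lemma dvan
    (h2 : ∀ (i : Fin n →₀ ℕ) (x : Fin n → K), 2 ≤ i.sum (fun _ e => e) →
      MvPowerSeries.coeff (R := ExteriorAlgebra K (Fin n → K)) i (D (ι K x)) = 0) :
    ∀ (L : List (Fin n → K)) (S : Finset (Fin n)), L.length < S.card →
    MvPowerSeries.coeff (R := ExteriorAlgebra K (Fin n → K)) (eF S)
      (D ((L.map (fun y => ι K y)).prod)) = 0 := by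
  intro L
  induction L with
  | nil =>
    intro S hS
    simp only [List.map_nil, List.prod_nil]
    rw [map_one, MvPowerSeries.coeff_one,
      if_neg (fun h => by rw [eF_eq_zero_iff] at h; rw [h] at hS; simp at hS)]
  | cons y L ih =>
    intro S hS
    rw [List.map_cons, List.prod_cons, leib]
    refine Finset.sum_eq_zero (fun U hU => ?_)
    by_cases hc : U.card ≤ 1
    · have hcard : L.length < (S \ U).card := by
        rw [Finset.card_sdiff_of_subset (Finset.mem_powerset.mp hU)]
        have := Finset.card_le_card (Finset.mem_powerset.mp hU)
        simp only [List.length_cons] at hS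
        omega
      rw [ih _ hcard, mul_zero]
    · rw [h2 _ _ (by rw [eF_deg]; omega), zero_mul]

/-- membership of products of `ι`'s in powers of the range. -/
lemma powmem (L : List (Fin n → K)) :
    (L.map (fun y => ι K y)).prod ∈
      (LinearMap.range (ι K : (Fin n → K) →ₗ[K] ExteriorAlgebra K (Fin n → K))) ^ L.length := by
  induction L with
  | nil =>
    simp only [List.map_nil, List.prod_nil, List.length_nil, pow_zero]
    exact Submodule.mem_one.mpr ⟨1, map_one _⟩
  | cons y L ih =>
    rw [List.map_cons, List.prod_cons, List.length_cons, pow_succ']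
    exact Submodule.mul_mem_mul (LinearMap.mem_range_self _ y) ih

/-- regrouping a double powerset sum. -/
lemma regroup {α : Type*} [AddCommMonoid α] [DecidableEq (Fin n)]
    (f : Finset (Fin n) → Finset (Fin n) → Finset (Fin n) → α) :
    ∑ T ∈ (Finset.univ : Finset (Fin n)).powerset, ∑ U ∈ T.powerset, f U (T \ U) Tᶜ
      = ∑ V ∈ (Finset.univ : Finset (Fin n)).powerset, ∑ U ∈ Vᶜ.powerset, f U V (Vᶜ \ U) := by
  rw [Finset.sum_sigma', Finset.sum_sigma']
  refine Finset.sum_nbij' (fun p => ⟨p.1 \ p.2, p.2⟩) (fun q => ⟨q.1 ∪ q.2, q.2⟩)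
    ?_ ?_ ?_ ?_ ?_
  · rintro ⟨T, U⟩ hp
    simp only [Finset.mem_sigma, Finset.mem_powerset] at hp ⊢
    refine ⟨Finset.subset_univ _, fun a ha => Finset.mem_compl.mpr (fun hc => ?_)⟩
    exact (Finset.mem_sdiff.mp hc).2 ha
  · rintro ⟨V, U⟩ hq
    simp only [Finset.mem_sigma, Finset.mem_powerset] at hq ⊢
    exact ⟨Finset.subset_univ _, Finset.subset_union_right⟩
  · rintro ⟨T, U⟩ hp
    simp only [Finset.mem_sigma, Finset.mem_powerset] at hp
    dsimp only
    rw [Finset.sdiff_union_of_subset hp.2]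
  · rintro ⟨V, U⟩ hq
    simp only [Finset.mem_sigma, Finset.mem_powerset] at hq
    have hd : Disjoint V U := Finset.disjoint_left.mpr
      (fun a haV haU => (Finset.mem_compl.mp (hq.2 haU)) haV)
    dsimp only
    rw [Finset.union_sdiff_cancel_right hd]
  · rintro ⟨T, U⟩ hp
    simp only [Finset.mem_sigma, Finset.mem_powerset] at hp
    have h3 : Tᶜ = (T \ U)ᶜ \ U := by
      ext a
      simp only [Finset.mem_compl, Finset.mem_sdiff]
      constructor
      · intro h
        exact ⟨fun hc => h hc.1, fun hc => h (hp.2 hc)⟩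
      · rintro ⟨h1, h2⟩ hc
        exact h1 ⟨hc, h2⟩
    rw [← h3]

/-- repeated factors kill products. -/
lemma kill (s : Fin n) : ∀ (L : List (Fin n)), s ∈ L →
    ι K (bv' K s) * (L.map (fun t => ι K (bv' K t))).prod = (0 : ExteriorAlgebra K (Fin n → K)) := by
  intro L
  induction L with
  | nil => intro h; simp at h
  | cons t L ih =>
    intro hs
    rw [List.map_cons, List.prod_cons, ← mul_assoc]
    rcases List.mem_cons.mp hs with rfl | hs'
    · rw [ι_sq_zero, zero_mul]
    · have h0 : ι K (bv' K s) * ι K (bv' K t) + ι K (bv' K t) * ι K (bv' K s) = 0 :=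
        ι_add_mul_swap _ _
      have hanti : ι K (bv' K s) * ι K (bv' K t) = - (ι K (bv' K t) * ι K (bv' K s)) :=
        eq_neg_of_add_eq_zero_left h0
      rw [hanti, neg_mul, mul_assoc, ih hs', mul_zero, neg_zero]

/-- products of distinct basis `ι`'s over a full listing are nonzero. -/
lemma prod_ne_zero (L : List (Fin n)) (hnd : L.Nodup) (hlen : L.length = n) :
    (L.map (fun t => ι K (bv' K t))).prod ≠ (0 : ExteriorAlgebra K (Fin n → K)) := by
  classical
  have hinj : Function.Injective (fun i : Fin n => L.get (Fin.cast hlen.symm i)) := by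
    intro a b hab
    have h1 := (List.nodup_iff_injective_get.mp hnd) hab
    have h2 := congrArg Fin.val h1
    simp only [Fin.coe_cast] at h2
    exact Fin.ext h2
  have hbij : Function.Bijective (fun i : Fin n => L.get (Fin.cast hlen.symm i)) :=
    Finite.injective_iff_bijective.mp hinj
  set g : Fin n → Fin n := fun i => L.get (Fin.cast hlen.symm i) with hg
  set σ : Equiv.Perm (Fin n) := Equiv.ofBijective g hbij with hσ
  have hprod : (L.map (fun t => ι K (bv' K t))).prod
      = ιMulti K n (fun i => (bv' K (g i) : Fin n → K)) := by
    rw [ιMulti_apply]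
    refine congrArg List.prod ?_
    refine List.ext_getElem (by simp [hlen]) (fun i h1 h2 => ?_)
    simp only [List.getElem_map, List.getElem_ofFn]
    rfl
  set f : ∀ i : ℕ, (Fin n → K) [⋀^Fin i]→ₗ[K] K :=
    Function.update (fun i => (0 : (Fin n → K) [⋀^Fin i]→ₗ[K] K)) n
      Matrix.detRowAlternating with hf
  intro hzero
  have hval : liftAlternating (R := K) f ((L.map (fun t => ι K (bv' K t))).prod)
      = Matrix.det (Matrix.of (fun i j => bv' K (g i) j)) := by
    rw [hprod, liftAlternating_apply_ιMulti]
    rw [hf, Function.update_self]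
    rfl
  have hmat : (Matrix.of fun i j => bv' K (g i) j) = σ.permMatrix K := by
    ext i j
    simp only [Matrix.of_apply, bv', Equiv.Perm.permMatrix, PEquiv.toMatrix_apply,
      Equiv.toPEquiv_apply, Option.mem_def, Option.some_inj]
    have : σ i = g i := rfl
    rw [this]
  rw [hzero, map_zero] at hval
  rw [hmat, Matrix.det_permutation] at hval
  rcases Int.units_eq_one_or (Equiv.Perm.sign σ) with h | h
  · rw [h] at hval; simp at hval
  · rw [h] at hval; simp at hval

end More



variable {K : Type*} [Field K] [CharZero K] {n : ℕ}

lemma key_matrix (hn : 0 < n) (A : Fin n → Matrix (Fin n) (Fin n) K)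
    (D : ExteriorAlgebra K (Fin n → K) →ₐ[K]
      MvPowerSeries (Fin n) (ExteriorAlgebra K (Fin n → K)))
    (h0 : ∀ x : Fin n → K,
      MvPowerSeries.coeff (R := ExteriorAlgebra K (Fin n → K)) 0 (D (ι K x)) = ι K x)
    (h1 : ∀ (t : Fin n) (x : Fin n → K),
      MvPowerSeries.coeff (R := ExteriorAlgebra K (Fin n → K)) (Finsupp.single t 1)
        (D (ι K x)) = - ι K ((A t).mulVec x))
    (h2 : ∀ (i : Fin n →₀ ℕ) (x : Fin n → K), 2 ≤ i.sum (fun _ e => e) →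
      MvPowerSeries.coeff (R := ExteriorAlgebra K (Fin n → K)) i (D (ι K x)) = 0)
    (τ : (Fin n →₀ ℕ) → K)
    (hτ : ∀ (i : Fin n →₀ ℕ),
      ∀ u ∈ (LinearMap.range (ι K : (Fin n → K) →ₗ[K] ExteriorAlgebra K (Fin n → K))) ^ n,
        MvPowerSeries.coeff (R := ExteriorAlgebra K (Fin n → K)) i (D u) =
          ((-1 : K) ^ (i.sum fun _ e => e) * τ i) • u) :
    ∑ T : Finset (Fin n), ((-1 : K) ^ T.card * τ (eF T)) • Bm A Tᶜ = 0 := by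
  suffices hvec : ∀ x : Fin n → K,
      (∑ T : Finset (Fin n), ((-1 : K) ^ T.card * τ (eF T)) • Bm A Tᶜ).mulVec x = 0 by
    apply Matrix.ext
    intro r c
    have := congrFun (hvec (bv' K c)) r
    simp only [Matrix.mulVec, dotProduct, bv', mul_ite, mul_one, mul_zero,
      Finset.sum_ite_eq, Finset.mem_univ, if_true, Pi.zero_apply, Matrix.zero_apply] at this ⊢
    exact this
  intro x
  set Mst : Matrix (Fin n) (Fin n) K :=
    ∑ T : Finset (Fin n), ((-1 : K) ^ T.card * τ (eF T)) • Bm A Tᶜ with hMst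
  set y : Fin n → K := Mst.mulVec x with hy
  -- for each r, the auxiliary list and product
  have main : ∀ r : Fin n, y r = 0 := by
    intro r
    set Lr : List (Fin n) := (List.finRange n).filter (fun s => s ≠ r) with hLr
    set v : ExteriorAlgebra K (Fin n → K) := (Lr.map (fun t => ι K (bv' K t))).prod with hv
    have hLrnodup : Lr.Nodup := (List.nodup_finRange n).filter _
    have hLrmem : ∀ s : Fin n, s ∈ Lr ↔ s ≠ r := by
      intro s
      rw [hLr, List.mem_filter]
      simp [List.mem_finRange]
    have hLrtoF : Lr.toFinset = Finset.univ.erase r := by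
      ext s
      rw [List.mem_toFinset, hLrmem, Finset.mem_erase]
      simp
    have hLrlen : Lr.length = n - 1 := by
      rw [← List.toFinset_card_of_nodup hLrnodup, hLrtoF,
        Finset.card_erase_of_mem (Finset.mem_univ r), Finset.card_univ, Fintype.card_fin]
    -- membership in J^n
    have hJmem : ∀ b : Fin n → K, ι K b * v ∈
        (LinearMap.range (ι K : (Fin n → K) →ₗ[K] ExteriorAlgebra K (Fin n → K))) ^ n := by
      intro b
      have h := powmem (K := K) (b :: Lr.map (fun t => bv' K t))
      rw [List.map_cons, List.prod_cons, List.length_cons, List.map_map, List.length_map,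
        hLrlen] at h
      rw [show n - 1 + 1 = n by omega] at h
      have hc : (Lr.map fun t => (fun y => ι K y) ((fun t => bv' K t) t)).prod
          = (Lr.map fun t => ι K (bv' K t)).prod := rfl
      rw [Function.comp_def] at h
      exact h
    -- evaluation 1 via hτ
    have heval1 : ∑ T ∈ (Finset.univ : Finset (Fin n)).powerset,
        MvPowerSeries.coeff (R := ExteriorAlgebra K (Fin n → K)) (eF T)
          (D (ι K ((Bm A Tᶜ).mulVec x) * v))
        = ∑ T ∈ (Finset.univ : Finset (Fin n)).powerset,
            ((-1 : K) ^ T.card * τ (eF T)) • (ι K ((Bm A Tᶜ).mulVec x) * v) := by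
      refine Finset.sum_congr rfl (fun T _ => ?_)
      rw [hτ (eF T) _ (hJmem _), eF_deg]
    -- evaluation 2 via Leibniz + convolution
    have heval2 : ∑ T ∈ (Finset.univ : Finset (Fin n)).powerset,
        MvPowerSeries.coeff (R := ExteriorAlgebra K (Fin n → K)) (eF T)
          (D (ι K ((Bm A Tᶜ).mulVec x) * v)) = 0 := by
      calc ∑ T ∈ (Finset.univ : Finset (Fin n)).powerset,
          MvPowerSeries.coeff (R := ExteriorAlgebra K (Fin n → K)) (eF T)
            (D (ι K ((Bm A Tᶜ).mulVec x) * v))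
          = ∑ T ∈ (Finset.univ : Finset (Fin n)).powerset, ∑ U ∈ T.powerset,
              MvPowerSeries.coeff (R := ExteriorAlgebra K (Fin n → K)) (eF U)
                (D (ι K ((Bm A Tᶜ).mulVec x)))
              * MvPowerSeries.coeff (R := ExteriorAlgebra K (Fin n → K)) (eF (T \ U)) (D v) :=
            Finset.sum_congr rfl (fun T _ => leib D T _ v)
        _ = ∑ V ∈ (Finset.univ : Finset (Fin n)).powerset, ∑ U ∈ Vᶜ.powerset,
              MvPowerSeries.coeff (R := ExteriorAlgebra K (Fin n → K)) (eF U)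
                (D (ι K ((Bm A (Vᶜ \ U)).mulVec x)))
              * MvPowerSeries.coeff (R := ExteriorAlgebra K (Fin n → K)) (eF V) (D v) := by
            exact regroup (fun U V R =>
              MvPowerSeries.coeff (R := ExteriorAlgebra K (Fin n → K)) (eF U)
                (D (ι K ((Bm A R).mulVec x)))
              * MvPowerSeries.coeff (R := ExteriorAlgebra K (Fin n → K)) (eF V) (D v))
        _ = ∑ V ∈ (Finset.univ : Finset (Fin n)).powerset,
              (if Vᶜ = ∅ then ι K x else 0)
              * MvPowerSeries.coeff (R := ExteriorAlgebra K (Fin n → K)) (eF V) (D v) := by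
            refine Finset.sum_congr rfl (fun V _ => ?_)
            rw [← Finset.sum_mul, conv A D h0 h1 h2 Vᶜ x]
        _ = (if (Finset.univ : Finset (Fin n))ᶜ = ∅ then ι K x else 0)
              * MvPowerSeries.coeff (R := ExteriorAlgebra K (Fin n → K)) (eF Finset.univ)
              (D v) :=
            Finset.sum_eq_single Finset.univ
              (fun V _ hV => by
                rw [if_neg (fun hc => hV ((Finset.compl_eq_empty_iff _).mp hc)), zero_mul])
              (fun h => absurd (Finset.mem_powerset.mpr (Finset.subset_univ _)) h)
        _ = ι K x * MvPowerSeries.coeff (R := ExteriorAlgebra K (Fin n → K)) (eF Finset.univ)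
              (D v) := by
            rw [if_pos Finset.compl_univ]
        _ = 0 := by
            have hd := dvan D h2 (Lr.map (fun t => bv' K t)) Finset.univ
              (by rw [List.length_map, hLrlen, Finset.card_univ, Fintype.card_fin]; omega)
            rw [List.map_map, Function.comp_def] at hd
            rw [hv, hd, mul_zero]
    -- combine
    have hcomb : ∑ T ∈ (Finset.univ : Finset (Fin n)).powerset,
        ((-1 : K) ^ T.card * τ (eF T)) • (ι K ((Bm A Tᶜ).mulVec x) * v) = 0 := by
      rw [← heval1, heval2]
    rw [Finset.powerset_univ] at hcomb
    have hiy : ι K y * v = 0 := by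
      have hyeq : y = ∑ T : Finset (Fin n),
          ((-1 : K) ^ T.card * τ (eF T)) • ((Bm A Tᶜ).mulVec x) := by
        rw [hy, hMst, sum_mulVec']
        exact Finset.sum_congr rfl (fun T _ => Matrix.smul_mulVec _ _ _)
      rw [hyeq, map_sum, Finset.sum_mul, ← hcomb]
      refine Finset.sum_congr rfl (fun T _ => ?_)
      rw [map_smul, smul_mul_assoc]
    -- extract coordinate r
    have hexp : ι K y * v = y r • (ι K (bv' K r) * v) := by
      have hy2 : y = ∑ s : Fin n, y s • bv' K s := pi_eq_sum_univ y
      calc ι K y * v = (∑ s : Fin n, y s • ι K (bv' K s)) * v := by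
            conv_lhs => rw [hy2]
            rw [map_sum]
            simp only [map_smul]
        _ = ∑ s : Fin n, y s • (ι K (bv' K s) * v) := by
            rw [Finset.sum_mul]
            exact Finset.sum_congr rfl (fun s _ => smul_mul_assoc _ _ _)
        _ = y r • (ι K (bv' K r) * v) :=
            Finset.sum_eq_single r
              (fun s _ hs => by rw [kill s Lr ((hLrmem s).mpr hs), smul_zero])
              (fun h => absurd (Finset.mem_univ r) h)
    have hne : ι K (bv' K r) * v ≠ 0 := by
      have : ι K (bv' K r) * v = ((r :: Lr).map (fun t => ι K (bv' K t))).prod := by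
        rw [List.map_cons, List.prod_cons]
      rw [this]
      refine prod_ne_zero (r :: Lr) ?_ ?_
      · exact List.Nodup.cons (fun hc => ((hLrmem r).mp hc) rfl) hLrnodup
      · rw [List.length_cons, hLrlen]; omega
    rw [hexp] at hiy
    by_contra hyr
    exact hne (by
      calc ι K (bv' K r) * v = (y r)⁻¹ • (y r • (ι K (bv' K r) * v)) := by
            rw [inv_smul_smul₀ hyr]
        _ = 0 := by rw [hiy, smul_zero])
  funext r
  exact main r

end CH13

open ExteriorAlgebra


/-- Generalised Cayley–Hamilton theorem: for an `n`-tuple `A = (A₁,…,A_n)` of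
`n×n` matrices over a field of characteristic zero, with `τ_i(A)` the `i`-trace
(the scalar by which `D̄_i` acts on `⋀ⁿKⁿ`, where
`D̄(z) = Σ_i (-1)^{|i|} D̄_i z^i` is the multivariate HS-derivation on `⋀(Kⁿ)`
with `D̄(z)|_{Kⁿ} = 1 - Σ_t A_t z_t`), one has
`Σ_{k=0}^n (-1)^k (1/k!) Σ_{σ∈S_n} τ_{e_{σ(1)}+⋯+e_{σ(k)}}(A) · A_{σ(k+1)}⋯A_{σ(n)} = 0`. -/
theorem stmt_13 (K : Type*) [Field K] [CharZero K] (n : ℕ)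
    (A : Fin n → Matrix (Fin n) (Fin n) K)
    (D : ExteriorAlgebra K (Fin n → K) →ₐ[K]
      MvPowerSeries (Fin n) (ExteriorAlgebra K (Fin n → K)))
    (h0 : ∀ x : Fin n → K,
      MvPowerSeries.coeff (R := ExteriorAlgebra K (Fin n → K)) 0 (D (ι K x)) = ι K x)
    (h1 : ∀ (t : Fin n) (x : Fin n → K),
      MvPowerSeries.coeff (R := ExteriorAlgebra K (Fin n → K)) (Finsupp.single t 1)
        (D (ι K x)) = - ι K ((A t).mulVec x))
    (h2 : ∀ (i : Fin n →₀ ℕ) (x : Fin n → K), 2 ≤ i.sum (fun _ e => e) →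
      MvPowerSeries.coeff (R := ExteriorAlgebra K (Fin n → K)) i (D (ι K x)) = 0)
    (τ : (Fin n →₀ ℕ) → K)
    (hτ : ∀ (i : Fin n →₀ ℕ),
      ∀ u ∈ (LinearMap.range (ι K : (Fin n → K) →ₗ[K] ExteriorAlgebra K (Fin n → K))) ^ n,
        MvPowerSeries.coeff (R := ExteriorAlgebra K (Fin n → K)) i (D u) =
          ((-1 : K) ^ (i.sum fun _ e => e) * τ i) • u) :
    ∑ k ∈ Finset.range (n + 1), ((-1 : K) ^ k / (k.factorial : K)) •
      ∑ σ : Equiv.Perm (Fin n),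
        τ (∑ j : Fin n, if (j : ℕ) < k then Finsupp.single (σ j) 1 else 0) •
          (((List.finRange n).drop k).map (fun j => A (σ j))).prod = 0 := by
  rcases Nat.eq_zero_or_pos n with hn | hn
  · subst hn
    apply Matrix.ext
    intro i j
    exact i.elim0
  · have hstep : ∀ k ∈ Finset.range (n+1),
        (∑ σ : Equiv.Perm (Fin n),
          τ (∑ j : Fin n, if (j : ℕ) < k then Finsupp.single (σ j) 1 else 0) •
            (((List.finRange n).drop k).map (fun j => A (σ j))).prod)
        = k.factorial • ∑ S ∈ Finset.powersetCard (n - k) (Finset.univ : Finset (Fin n)),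
            τ (CH13.eF Sᶜ) • CH13.Bm A S := by
      intro k hk
      have hk' : k ≤ n := Nat.lt_succ_iff.mp (Finset.mem_range.mp hk)
      have hterm : ∀ σ : Equiv.Perm (Fin n),
          τ (∑ j : Fin n, if (j : ℕ) < k then Finsupp.single (σ j) 1 else 0) •
            (((List.finRange n).drop k).map (fun j => A (σ j))).prod
          = (fun w : List (Fin n) => τ (CH13.eF (w.toFinset)ᶜ) • ((w.map A).prod))
              (((List.finRange n).drop k).map σ) := by
        intro σ
        dsimp only
        congr 1
        · congr 1
          have e1 : (∑ j : Fin n, if (j : ℕ) < k then Finsupp.single (σ j) 1 else 0)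
              = ∑ j ∈ Finset.univ.filter (fun j : Fin n => (j : ℕ) < k),
                  Finsupp.single (σ j) 1 := (Finset.sum_filter _ _).symm
          have e2 : ∑ j ∈ Finset.univ.filter (fun j : Fin n => (j : ℕ) < k),
                Finsupp.single (σ j) 1
              = ∑ t ∈ Finset.image σ (Finset.univ.filter (fun j : Fin n => (j : ℕ) < k)),
                  Finsupp.single t 1 :=
            (Finset.sum_image (f := fun t : Fin n => Finsupp.single t (1 : ℕ)) (g := σ)
              (fun a _ b _ h => σ.injective h)).symm
          have e3 : Finset.image σ (Finset.univ.filter (fun j : Fin n => (j : ℕ) < k))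
              = ((((List.finRange n).drop k).map σ).toFinset)ᶜ := by
            have h4 : (((List.finRange n).drop k).map σ).toFinset
                = Finset.image σ (Finset.univ.filter (fun j : Fin n => k ≤ (j : ℕ))) := by
              ext t
              simp only [List.mem_toFinset, List.mem_map, Finset.mem_image, Finset.mem_filter,
                Finset.mem_univ, true_and, CH13.mem_drop_finRange]
            rw [h4, ← CH13.perm_image_compl]
            congr 1
            ext j
            simp only [Finset.mem_compl, Finset.mem_filter, Finset.mem_univ, true_and]
            omega
          rw [e1, e2, e3]
          rfl
        · rw [List.map_map]
          rfl
      rw [Finset.sum_congr rfl (fun σ _ => hterm σ)]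
      have hcnt := CH13.count_claim K (n - k) (by omega)
        (fun w : List (Fin n) => τ (CH13.eF (w.toFinset)ᶜ) • ((w.map A).prod))
      rw [show n - (n - k) = k from by omega] at hcnt
      rw [hcnt]
      congr 1
      refine Finset.sum_congr rfl (fun S hS => ?_)
      rw [CH13.PHI_congr _ (fun w : List (Fin n) => τ (CH13.eF Sᶜ) • ((w.map A).prod)) S
        (fun w _ hw => by rw [hw]), CH13.PHI_smul]
      rfl
    have hks : ∀ k ∈ Finset.range (n+1),
        ((-1 : K) ^ k / (k.factorial : K)) •
          ∑ σ : Equiv.Perm (Fin n),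
            τ (∑ j : Fin n, if (j : ℕ) < k then Finsupp.single (σ j) 1 else 0) •
              (((List.finRange n).drop k).map (fun j => A (σ j))).prod
        = ∑ S ∈ Finset.powersetCard (n - k) (Finset.univ : Finset (Fin n)),
            ((-1 : K) ^ Sᶜ.card * τ (CH13.eF Sᶜ)) • CH13.Bm A S := by
      intro k hk
      have hk' : k ≤ n := Nat.lt_succ_iff.mp (Finset.mem_range.mp hk)
      rw [hstep k hk, ← Nat.cast_smul_eq_nsmul K, smul_smul,
        div_mul_cancel₀ _ (Nat.cast_ne_zero.mpr (Nat.factorial_ne_zero k)),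
        Finset.smul_sum]
      refine Finset.sum_congr rfl (fun S hS => ?_)
      rw [Finset.mem_powersetCard_univ] at hS
      rw [smul_smul, Finset.card_compl, Fintype.card_fin, hS,
        show n - (n - k) = k from by omega]
    rw [Finset.sum_congr rfl hks]
    have hrefl := Finset.sum_range_reflect
      (fun k => ∑ S ∈ Finset.powersetCard k (Finset.univ : Finset (Fin n)),
        ((-1 : K) ^ Sᶜ.card * τ (CH13.eF Sᶜ)) • CH13.Bm A S) (n+1)
    simp only [Nat.add_sub_cancel] at hrefl
    rw [hrefl]
    have hpow := (Finset.sum_powerset (Finset.univ : Finset (Fin n))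
      (fun S => ((-1 : K) ^ Sᶜ.card * τ (CH13.eF Sᶜ)) • CH13.Bm A S))
    rw [Finset.card_univ, Fintype.card_fin] at hpow
    rw [← hpow, Finset.powerset_univ]
    have hkey := CH13.key_matrix hn A D h0 h1 h2 τ hτ
    rw [← hkey]
    refine Fintype.sum_equiv ⟨fun S => Sᶜ, fun S => Sᶜ, fun S => compl_compl S,
      fun S => compl_compl S⟩ _ _ (fun S => ?_)
    show ((-1 : K) ^ Sᶜ.card * τ (CH13.eF Sᶜ)) • CH13.Bm A S
      = ((-1 : K) ^ Sᶜ.card * τ (CH13.eF Sᶜ)) • CH13.Bm A Sᶜᶜ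
    rw [compl_compl]
end

section
/- For any three 3×3 matrices A, B, C over a commutative ring, the full polarization of Cayley–Hamilton holds: Σ over all 6 orderings (X,Y,Z) of (A,B,C) of XYZ, minus [tr(A)(BC+CB) + tr(B)(AC+CA) + tr(C)(AB+BA)], plus [τ_{(0,1,1)}A + τ_{(1,0,1)}B + τ_{(1,1,0)}C], minus τ_{(1,1,1)}·1, equals 0, where τ_{(1,1,0)} = tr(A)tr(B) - tr(AB) and cyclic, and τ_{(1,1,1)} = tr(A)tr(B)tr(C) - tr(A)tr(BC) - tr(B)tr(AC) - tr(C)tr(AB) + tr(ABC) + tr(ACB). -/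
set_option maxHeartbeats 2000000

open Matrix

/-- Full polarization of Cayley–Hamilton for 3×3 matrices. -/
theorem stmt_14 {R : Type*} [CommRing R] (A B C : Matrix (Fin 3) (Fin 3) R) :
    (A * B * C + A * C * B + B * A * C + B * C * A + C * A * B + C * B * A)
      - (A.trace • (B * C + C * B) + B.trace • (A * C + C * A) +
          C.trace • (A * B + B * A))
      + ((B.trace * C.trace - (B * C).trace) • A +
          (A.trace * C.trace - (A * C).trace) • B +
          (A.trace * B.trace - (A * B).trace) • C)
      - (A.trace * B.trace * C.trace - A.trace * (B * C).trace
          - B.trace * (A * C).trace - C.trace * (A * B).trace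
          + (A * B * C).trace + (A * C * B).trace) • (1 : Matrix (Fin 3) (Fin 3) R)
      = 0 := by
  ext i j
  fin_cases i <;> fin_cases j <;>
    simp [Matrix.mul_apply, Matrix.trace, Matrix.diag, Fin.sum_univ_succ,
      Matrix.one_apply] <;> ring
end

section
/- For 3×3 matrices A and B over a commutative ring, the identity (A²B + ABA + BA²) - tr(A)(AB + BA) - tr(B)A² + τ_{(2,0)}·B + τ_{(1,1)}·A - τ_{(2,1)}·1 = 0 holds, where τ_{(2,0)} = (tr(A)² - tr(A²))/2, τ_{(1,1)} = tr(A)tr(B) - tr(AB), and τ_{(2,1)} is the sum of the three determinants obtained from A by replacing one of its three columns by the corresponding column of B (i.e. the mixed invariant given by the coefficient of t in det(A + tB)). -/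
open Matrix

/-- Sum of the principal 2×2 minors of a 3×3 matrix. -/
def c2 {R : Type*} [CommRing R] (A : Matrix (Fin 3) (Fin 3) R) : R :=
  (A 0 0 * A 1 1 - A 0 1 * A 1 0) + (A 0 0 * A 2 2 - A 0 2 * A 2 0) +
    (A 1 1 * A 2 2 - A 1 2 * A 2 1)

/-- Mixed trace `τ_{(2,1)}(A,B)`: the sum of the determinants of the matrices with
two columns from `A` and one column from `B`, in the three possible positions. -/
def tau21 {R : Type*} [CommRing R] (A B : Matrix (Fin 3) (Fin 3) R) : R :=
  (A.updateCol 2 fun i => B i 2).det + (A.updateCol 1 fun i => B i 1).det +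
    (A.updateCol 0 fun i => B i 0).det

theorem stmt_15 {R : Type*} [CommRing R] (A B : Matrix (Fin 3) (Fin 3) R) :
    (A * A * B + A * B * A + B * A * A) - A.trace • (A * B + B * A)
      - B.trace • (A * A) + c2 A • B + (A.trace * B.trace - (A * B).trace) • A
      - tau21 A B • (1 : Matrix (Fin 3) (Fin 3) R) = 0 := by
  ext i j
  fin_cases i <;> fin_cases j <;>
    simp [c2, tau21, Matrix.mul_apply, Fin.sum_univ_three, Matrix.trace_fin_three,
      Matrix.det_fin_three, Matrix.updateCol_apply, Matrix.one_apply] <;> ring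
end
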